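/- The Katsuno–Mendelzon identity P ⊖ Q ≡ P ⊓ (P ⋄ ¬Q) fails for PEKB belief erasure and update: for any agent i and atomic proposition p, taking P = {B_i p} and Q = {◇_i p, ◇_i ¬p}, one has P ⊖ Q = ∅, while P ⊓ (P ⋄ ¬Q) ⊨ B_i p; hence P ⊖ Q is not logically equivalent to P ⊓ (P ⋄ ¬Q). -/
import Mathlib


/-- Modal formulae over atomic propositions `Atom` and agents `Agt`. -/
inductive Form (Atom Agt : Type) : Type
  | top : Form Atom Agt
  | bot : Form Atom Agt
  | atom : Atom → Form Atom Agt
  | neg : Form Atom Agt → Form Atom Agt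
  | and : Form Atom Agt → Form Atom Agt → Form Atom Agt
  | box : Agt → Form Atom Agt → Form Atom Agt

/-- `◇_i φ` abbreviates `¬ B_i ¬ φ`. -/
def Form.dia {Atom Agt : Type} (i : Agt) (φ : Form Atom Agt) : Form Atom Agt :=
  Form.neg (Form.box i (Form.neg φ))

/-- A Kripke structure: worlds, a valuation, and an accessibility relation per agent. -/
structure Kripke (Atom Agt : Type) where
  W : Type
  val : W → Atom → Prop
  R : Agt → W → W → Prop

/-- Every accessibility relation is serial: every world has a successor. -/
def Kripke.Serial {Atom Agt : Type} (M : Kripke Atom Agt) : Prop :=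
  ∀ (i : Agt) (w : M.W), ∃ v : M.W, M.R i w v

/-- Satisfaction of a formula at a world of a Kripke structure. -/
def Sat {Atom Agt : Type} (M : Kripke Atom Agt) : M.W → Form Atom Agt → Prop
  | _, Form.top => True
  | _, Form.bot => False
  | w, Form.atom p => M.val w p
  | w, Form.neg φ => ¬ Sat M w φ
  | w, Form.and φ ψ => Sat M w φ ∧ Sat M w ψ
  | w, Form.box i φ => ∀ v : M.W, M.R i w v → Sat M v φ

/-- KD_n entailment from a set of formulae: truth at every world of every serial
Kripke structure satisfying all members of `S`. -/
def SetEntails {Atom Agt : Type} (S : Set (Form Atom Agt)) (φ : Form Atom Agt) : Prop :=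
  ∀ (M : Kripke Atom Agt), M.Serial → ∀ w : M.W, (∀ ψ ∈ S, Sat M w ψ) → Sat M w φ

/-- KD_n entailment between single formulae. -/
def Entails {Atom Agt : Type} (φ ψ : Form Atom Agt) : Prop :=
  SetEntails {φ} ψ

/-- A set of formulae is consistent iff all its members hold simultaneously at
some world of some serial Kripke structure. -/
def Consistent {Atom Agt : Type} (S : Set (Form Atom Agt)) : Prop :=
  ∃ (M : Kripke Atom Agt), M.Serial ∧ ∃ w : M.W, ∀ ψ ∈ S, Sat M w ψ

/-- Restricted modal literals: a (possibly empty) sequence of `B_i`/`◇_i`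
operators applied to a propositional literal. -/
inductive IsRML {Atom Agt : Type} : Form Atom Agt → Prop
  | pos (p : Atom) : IsRML (Form.atom p)
  | neg (p : Atom) : IsRML (Form.neg (Form.atom p))
  | box (i : Agt) {φ : Form Atom Agt} : IsRML φ → IsRML (Form.box i φ)
  | dia (i : Agt) {φ : Form Atom Agt} : IsRML φ → IsRML (Form.dia i φ)

/-- A proper epistemic knowledge base: a finite set of RMLs. -/
def IsPEKB {Atom Agt : Type} (S : Set (Form Atom Agt)) : Prop :=
  S.Finite ∧ ∀ φ ∈ S, IsRML φ

/-- Entailment of every member of a set (PEKB) from a set. -/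
def KBEntails {Atom Agt : Type} (S T : Set (Form Atom Agt)) : Prop :=
  ∀ φ ∈ T, SetEntails S φ

/-- Logical equivalence of two sets of formulae. -/
def KBEquiv {Atom Agt : Type} (S T : Set (Form Atom Agt)) : Prop :=
  KBEntails S T ∧ KBEntails T S

/-- Upward closure: the RMLs entailed by some member of `S`. -/
def upSet {Atom Agt : Type} (S : Set (Form Atom Agt)) : Set (Form Atom Agt) :=
  {ψ | IsRML ψ ∧ ∃ φ ∈ S, Entails φ ψ}

/-- Downward closure: the RMLs entailing some member of `S`. -/
def downSet {Atom Agt : Type} (S : Set (Form Atom Agt)) : Set (Form Atom Agt) :=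
  {ψ | IsRML ψ ∧ ∃ φ ∈ S, Entails ψ φ}

/-- Maximal elements of a set of RMLs under entailment. -/
def maxSet {Atom Agt : Type} (S : Set (Form Atom Agt)) : Set (Form Atom Agt) :=
  {φ ∈ S | ∀ ψ ∈ S, Entails ψ φ → Entails φ ψ}

/-- NNF-negation of an RML: push the negation through the modalities. -/
def nnfNeg {Atom Agt : Type} : Form Atom Agt → Form Atom Agt
  | Form.atom p => Form.neg (Form.atom p)
  | Form.neg (Form.atom p) => Form.atom p
  | Form.neg (Form.box i (Form.neg φ)) => Form.box i (nnfNeg φ)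
  | Form.box i φ => Form.dia i (nnfNeg φ)
  | φ => φ

/-- NNF-negation of every member of a PEKB. -/
def negKB {Atom Agt : Type} (S : Set (Form Atom Agt)) : Set (Form Atom Agt) :=
  nnfNeg '' S

/-- Belief erasure: `P ⊖ Q = max(↑P ∖ ↓Q)`. -/
def eraseKB {Atom Agt : Type} (P Q : Set (Form Atom Agt)) : Set (Form Atom Agt) :=
  maxSet (upSet P \ downSet Q)

/-- Belief update: `P ⋄ Q = max((P ⊖ ¬Q) ∪ Q)`. -/
def updateKB {Atom Agt : Type} (P Q : Set (Form Atom Agt)) : Set (Form Atom Agt) :=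
  maxSet (eraseKB P (negKB Q) ∪ Q)

/-- Meet: `P ⊓ Q = max(↑P ∩ ↑Q)`. -/
def meetKB {Atom Agt : Type} (P Q : Set (Form Atom Agt)) : Set (Form Atom Agt) :=
  maxSet (upSet P ∩ upSet Q)



section KMaux

open Classical

variable {Atom Agt : Type}

/-- Sign of the innermost literal of an RML. -/
def sgn : Form Atom Agt → Bool
  | Form.top => true
  | Form.bot => true
  | Form.atom _ => true
  | Form.neg φ => !sgn φ
  | Form.and _ _ => true
  | Form.box _ φ => sgn φ

lemma sgn_dia (i : Agt) (φ : Form Atom Agt) : sgn (Form.dia i φ) = sgn φ := by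
  simp [Form.dia, sgn]

/-- In a world whose only successors (for every agent) are itself, with a constant
valuation `c`, an RML holds iff its sign matches `c`. -/
lemma selfloopSat (M : Kripke Atom Agt) (w : M.W) (c : Prop)
    (h1 : ∀ k v, M.R k w v → v = w) (h2 : ∀ k, M.R k w w)
    (h3 : ∀ a, M.val w a ↔ c) :
    ∀ {φ : Form Atom Agt}, IsRML φ → (Sat M w φ ↔ ((sgn φ = true) ↔ c)) := by
  intro φ h
  induction h with
  | pos q => simp [Sat, sgn, h3 q]
  | neg q => simp [Sat, sgn, h3 q]
  | @box j φ hφ ih =>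
      rw [show sgn (Form.box j φ) = sgn φ from rfl]
      show (∀ v, M.R j w v → Sat M v φ) ↔ _
      constructor
      · intro hb; exact ih.mp (hb w (h2 j))
      · intro hc v hv
        rcases h1 j v hv with rfl
        exact ih.mpr hc
  | @dia j φ hφ ih =>
      rw [sgn_dia]
      show (¬ ∀ v, M.R j w v → ¬ Sat M v φ) ↔ _
      constructor
      · intro hd
        by_contra hc
        apply hd
        intro v hv
        rcases h1 j v hv with rfl
        intro hs
        exact hc (ih.mp hs)
      · intro hc hall
        exact hall w (h2 j) (ih.mpr hc)

/-- Add a fresh root below `w0`; every agent's arrow from the root goes to `w0`. -/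
@[reducible] def addRoot (M : Kripke Atom Agt) (w0 : M.W) : Kripke Atom Agt where
  W := Option M.W
  val w a := ∃ u, w = some u ∧ M.val u a
  R k w v := match w with
    | none => v = some w0
    | some u => ∃ u', M.R k u u' ∧ v = some u'

lemma liftSerial (M : Kripke Atom Agt) (w0 : M.W) (h : M.Serial) :
    (addRoot M w0).Serial := by
  intro k w
  cases w with
  | none => exact ⟨some w0, rfl⟩
  | some u =>
      obtain ⟨u', hu'⟩ := h k u
      exact ⟨some u', u', hu', rfl⟩

lemma liftSat (M : Kripke Atom Agt) (w0 : M.W) :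
    ∀ (φ : Form Atom Agt) (u : M.W), Sat (addRoot M w0) (some u) φ ↔ Sat M u φ := by
  intro φ
  induction φ with
  | top => intro u; exact Iff.rfl
  | bot => intro u; exact Iff.rfl
  | atom q =>
      intro u
      show (∃ u', some u = some u' ∧ M.val u' q) ↔ M.val u q
      simp
  | neg φ ih =>
      intro u
      show ¬ _ ↔ ¬ _
      exact not_congr (ih u)
  | and φ ψ ih1 ih2 =>
      intro u
      show _ ∧ _ ↔ _ ∧ _
      exact and_congr (ih1 u) (ih2 u)
  | box k φ ih =>
      intro u
      show (∀ v, (addRoot M w0).R k (some u) v → Sat _ v φ) ↔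
        (∀ v, M.R k u v → Sat M v φ)
      constructor
      · intro hb v hv
        exact (ih v).mp (hb (some v) ⟨v, hv, rfl⟩)
      · intro hb v hv
        obtain ⟨u', hu', rfl⟩ := hv
        exact (ih u').mpr (hb u' hu')

/-- One world, constant valuation `c`, total relation. -/
@[reducible] def constM (Atom Agt : Type) (c : Prop) : Kripke Atom Agt where
  W := Unit
  val _ _ := c
  R _ _ _ := True

lemma constSerial (c : Prop) : (constM Atom Agt c).Serial := fun _ _ => ⟨(), trivial⟩

/-- One world where exactly `p` holds. -/
@[reducible] def atomM (Agt : Type) {Atom : Type} (p : Atom) : Kripke Atom Agt where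
  W := Unit
  val _ a := a = p
  R _ _ _ := True

/-- Root (false) with all atoms true, a separate self-looping world (true) with
constant valuation `c`. -/
@[reducible] def twoM (Atom Agt : Type) (c : Prop) : Kripke Atom Agt where
  W := Bool
  val w _ := if w = true then c else True
  R _ _ v := v = true

/-- Root (false) with all atoms false, a world (true) with all atoms true. -/
@[reducible] def rootM (Atom Agt : Type) : Kripke Atom Agt where
  W := Bool
  val w _ := w = true
  R _ _ v := v = true

/-- Root 0; agent `i` goes to world 1 (all atoms true), other agents to 2
(constant valuation `c`); worlds 1, 2 self-loop. -/
@[reducible] def threeM (Atom : Type) {Agt : Type} (i : Agt) (c : Prop) : Kripke Atom Agt where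
  W := Fin 3
  val w _ := w = 1 ∨ (w = 2 ∧ c)
  R k w v := if w = 0 then (if k = i then v = 1 else v = 2) else v = w

lemma threeSerial (i : Agt) (c : Prop) : (threeM Atom i c).Serial := by
  intro k w
  by_cases hw : w = (0 : Fin 3)
  · by_cases hk : k = i
    · exact ⟨1, by simp [threeM, hw, hk]⟩
    · exact ⟨2, by simp [threeM, hw, hk]⟩
  · exact ⟨w, by simp [threeM, hw]⟩

lemma three_h1 (i : Agt) (c : Prop) :
    ∀ (k : Agt) (v : Fin 3), (threeM Atom i c).R k (2 : Fin 3) v → v = 2 := by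
  intro k v hv
  simpa [threeM, show ((2 : Fin 3) = 0) ↔ False by decide] using hv

lemma three_h2 (i : Agt) (c : Prop) :
    ∀ k : Agt, (threeM Atom i c).R k (2 : Fin 3) (2 : Fin 3) := by
  intro k
  simp [threeM, show ((2 : Fin 3) = 0) ↔ False by decide]

lemma three_h3 (i : Agt) (c : Prop) :
    ∀ a : Atom, (threeM Atom i c).val (2 : Fin 3) a ↔ c := by
  intro a
  simp [threeM, show ((2 : Fin 3) = 1) ↔ False by decide]

lemma entails_self (φ : Form Atom Agt) : Entails φ φ :=
  fun _ _ _ hw => hw φ (Set.mem_singleton _)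

lemma box_entails_dia (i : Agt) (p : Atom) :
    Entails (Form.box i (Form.atom p)) (Form.dia i (Form.atom p)) := by
  intro M hser w hw
  have hb : Sat M w (Form.box i (Form.atom p)) := hw _ (Set.mem_singleton _)
  show ¬ ∀ v, M.R i w v → ¬ Sat M v (Form.atom p)
  intro h
  obtain ⟨v, hv⟩ := hser i w
  exact h v hv (hb v hv)

lemma not_entails_bnp_bp (i : Agt) (p : Atom) :
    ¬ Entails (Form.box i (Form.neg (Form.atom p)))
        (Form.box i (Form.atom p) : Form Atom Agt) := by
  intro h
  have hs := h (constM Atom Agt False) (constSerial False) ()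
    (by rintro χ rfl; intro v _; exact not_false)
  exact hs () trivial

/-- The only RML entailed by the literal `p` is `p` itself. -/
lemma litp (p : Atom) {φ : Form Atom Agt} (h : IsRML φ)
    (he : Entails (Form.atom p) φ) : φ = Form.atom p := by
  cases h with
  | pos q =>
      have hqp : q = p :=
        he (atomM Agt p) (fun _ _ => ⟨(), trivial⟩) () (by rintro χ rfl; exact rfl)
      rw [hqp]
  | neg q =>
      have hs := he (constM Atom Agt True) (constSerial True) ()
        (by rintro χ rfl; exact trivial)
      exact absurd trivial hs
  | @box j φ hφ =>
      exfalso
      have hsat := he (twoM Atom Agt (¬ (sgn φ = true))) (fun _ _ => ⟨true, rfl⟩) false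
        (by rintro χ rfl; exact trivial)
      have hS : Sat (twoM Atom Agt (¬ (sgn φ = true))) true φ := hsat true rfl
      have := (selfloopSat (twoM Atom Agt (¬ (sgn φ = true))) true (¬ (sgn φ = true))
        (fun _ _ h => h) (fun _ => rfl) (fun _ => Iff.rfl) hφ).mp hS
      exact iff_not_self this
  | @dia j φ hφ =>
      exfalso
      have hsat := he (twoM Atom Agt (¬ (sgn φ = true))) (fun _ _ => ⟨true, rfl⟩) false
        (by rintro χ rfl; exact trivial)
      have hd : ¬ ∀ v, (twoM Atom Agt (¬ (sgn φ = true))).R j false v →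
          ¬ Sat (twoM Atom Agt (¬ (sgn φ = true))) v φ := hsat
      apply hd
      intro v hv
      rcases hv with rfl
      intro hS
      exact iff_not_self ((selfloopSat (twoM Atom Agt (¬ (sgn φ = true))) true
        (¬ (sgn φ = true)) (fun _ _ h => h) (fun _ => rfl) (fun _ => Iff.rfl) hφ).mp hS)

/-- Classification: the only RMLs entailed by `B_i p` are `B_i p` and `◇_i p`. -/
lemma classify (i : Agt) (p : Atom) {ψ : Form Atom Agt} (h : IsRML ψ)
    (he : Entails (Form.box i (Form.atom p)) ψ) :
    ψ = Form.box i (Form.atom p) ∨ ψ = Form.dia i (Form.atom p) := by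
  cases h with
  | pos q =>
      exfalso
      have hsat := he (rootM Atom Agt) (fun _ _ => ⟨true, rfl⟩) false
        (by rintro χ rfl; intro v hv; exact hv)
      have : (false : Bool) = true := hsat
      cases this
  | neg q =>
      exfalso
      have hsat := he (constM Atom Agt True) (constSerial True) ()
        (by rintro χ rfl; intro v _; exact trivial)
      exact hsat trivial
  | @box j φ hφ =>
      by_cases hj : j = i
      · subst hj
        left
        have hp : Entails (Form.atom p) φ := by
          intro M hser w hw
          have hwp : Sat M w (Form.atom p) := hw _ (Set.mem_singleton _)
          have hroot : Sat (addRoot M w) none (Form.box j (Form.atom p)) := by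
            intro v hv
            have hv' : v = some w := hv
            subst hv'
            exact (liftSat M w (Form.atom p) w).mpr hwp
          have hb := he (addRoot M w) (liftSerial M w hser) none
            (by rintro χ rfl; exact hroot)
          have hS : Sat (addRoot M w) (some w) φ := hb (some w) rfl
          exact (liftSat M w φ w).mp hS
        rw [litp p hφ hp]
      · exfalso
        have hsat := he (threeM Atom i (¬ (sgn φ = true))) (threeSerial i _) 0
          (by
            rintro χ rfl
            intro v hv
            have hv1 : v = 1 := by simpa [threeM, hj] using hv
            subst hv1
            exact Or.inl rfl)
        have hS : Sat (threeM Atom i (¬ (sgn φ = true))) (2 : Fin 3) φ :=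
          hsat 2 (by simp [threeM, hj])
        exact iff_not_self ((selfloopSat _ _ _ (three_h1 i _) (three_h2 i _)
          (three_h3 i _) hφ).mp hS)
  | @dia j φ hφ =>
      by_cases hj : j = i
      · subst hj
        right
        have hp : Entails (Form.atom p) φ := by
          intro M hser w hw
          have hwp : Sat M w (Form.atom p) := hw _ (Set.mem_singleton _)
          have hroot : Sat (addRoot M w) none (Form.box j (Form.atom p)) := by
            intro v hv
            have hv' : v = some w := hv
            subst hv'
            exact (liftSat M w (Form.atom p) w).mpr hwp
          have hb := he (addRoot M w) (liftSerial M w hser) none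
            (by rintro χ rfl; exact hroot)
          have hd : ¬ ∀ v, (addRoot M w).R j none v → ¬ Sat (addRoot M w) v φ := hb
          by_contra hn
          apply hd
          intro v hv
          have hv' : v = some w := hv
          subst hv'
          intro hS
          exact hn ((liftSat M w φ w).mp hS)
        rw [litp p hφ hp]
      · exfalso
        have hsat := he (threeM Atom i (¬ (sgn φ = true))) (threeSerial i _) 0
          (by
            rintro χ rfl
            intro v hv
            have hv1 : v = 1 := by simpa [threeM, hj] using hv
            subst hv1
            exact Or.inl rfl)
        have hd : ¬ ∀ v, (threeM Atom i (¬ (sgn φ = true))).R j (0 : Fin 3) v →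
            ¬ Sat (threeM Atom i (¬ (sgn φ = true))) v φ := hsat
        apply hd
        intro v hv
        have hv2 : v = 2 := by simpa [threeM, hj] using hv
        subst hv2
        intro hS
        exact iff_not_self ((selfloopSat _ _ _ (three_h1 i _) (three_h2 i _)
          (three_h3 i _) hφ).mp hS)

end KMaux

/-- The Katsuno–Mendelzon identity `P ⊖ Q ≡ P ⊓ (P ⋄ ¬Q)` fails
for PEKB belief erasure and update: with `P = {B_i p}` and
`Q = {◇_i p, ◇_i ¬p}` one has `P ⊖ Q = ∅`, while `P ⊓ (P ⋄ ¬Q) ⊨ B_i p`;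
hence `P ⊖ Q` is not logically equivalent to `P ⊓ (P ⋄ ¬Q)`. -/
theorem km_identity_fails {Atom Agt : Type} (i : Agt) (p : Atom) :
    eraseKB ({Form.box i (Form.atom p)} : Set (Form Atom Agt))
        {Form.dia i (Form.atom p), Form.dia i (Form.neg (Form.atom p))} = ∅ ∧
    KBEntails
      (meetKB ({Form.box i (Form.atom p)} : Set (Form Atom Agt))
        (updateKB {Form.box i (Form.atom p)}
          (negKB {Form.dia i (Form.atom p), Form.dia i (Form.neg (Form.atom p))})))
      {Form.box i (Form.atom p)} ∧
    ¬ KBEquiv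
        (eraseKB ({Form.box i (Form.atom p)} : Set (Form Atom Agt))
          {Form.dia i (Form.atom p), Form.dia i (Form.neg (Form.atom p))})
        (meetKB ({Form.box i (Form.atom p)} : Set (Form Atom Agt))
          (updateKB {Form.box i (Form.atom p)}
            (negKB {Form.dia i (Form.atom p), Form.dia i (Form.neg (Form.atom p))}))) := by
  classical
  have e1 : nnfNeg (Form.dia i (Form.atom p) : Form Atom Agt)
      = Form.box i (Form.neg (Form.atom p)) := rfl
  have e2 : nnfNeg (Form.dia i (Form.neg (Form.atom p)) : Form Atom Agt)
      = Form.box i (Form.atom p) := rfl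
  have e3 : nnfNeg (Form.box i (Form.neg (Form.atom p)) : Form Atom Agt)
      = Form.dia i (Form.atom p) := rfl
  have e4 : nnfNeg (Form.box i (Form.atom p) : Form Atom Agt)
      = Form.dia i (Form.neg (Form.atom p)) := rfl
  -- Part 1 : erasure is empty
  have h1 : eraseKB ({Form.box i (Form.atom p)} : Set (Form Atom Agt))
      {Form.dia i (Form.atom p), Form.dia i (Form.neg (Form.atom p))} = ∅ := by
    apply Set.eq_empty_iff_forall_notMem.mpr
    intro ψ hψ
    obtain ⟨⟨hup, hdown⟩, -⟩ := hψ
    apply hdown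
    obtain ⟨hR, φ, hφ, he⟩ := hup
    rw [Set.mem_singleton_iff] at hφ; subst hφ
    rcases classify i p hR he with rfl | rfl
    · exact ⟨hR, Form.dia i (Form.atom p), Set.mem_insert _ _, box_entails_dia i p⟩
    · exact ⟨hR, Form.dia i (Form.atom p), Set.mem_insert _ _, entails_self _⟩
  -- Computing the NNF negations of the knowledge bases
  have hnegQ : negKB ({Form.dia i (Form.atom p), Form.dia i (Form.neg (Form.atom p))} :
      Set (Form Atom Agt))
      = {Form.box i (Form.neg (Form.atom p)), Form.box i (Form.atom p)} := by
    show nnfNeg '' _ = _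
    rw [Set.image_insert_eq, Set.image_singleton, e1, e2]
  have hnegnegQ : negKB ({Form.box i (Form.neg (Form.atom p)), Form.box i (Form.atom p)} :
      Set (Form Atom Agt))
      = {Form.dia i (Form.atom p), Form.dia i (Form.neg (Form.atom p))} := by
    show nnfNeg '' _ = _
    rw [Set.image_insert_eq, Set.image_singleton, e3, e4]
  -- Computing the update
  have hU : updateKB ({Form.box i (Form.atom p)} : Set (Form Atom Agt))
      (negKB {Form.dia i (Form.atom p), Form.dia i (Form.neg (Form.atom p))})
      = maxSet ({Form.box i (Form.neg (Form.atom p)), Form.box i (Form.atom p)} :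
        Set (Form Atom Agt)) := by
    show maxSet _ = _
    rw [hnegQ, hnegnegQ, h1, Set.empty_union]
  have hmemU : (Form.box i (Form.atom p) : Form Atom Agt) ∈
      maxSet ({Form.box i (Form.neg (Form.atom p)), Form.box i (Form.atom p)} :
        Set (Form Atom Agt)) := by
    refine ⟨Set.mem_insert_iff.mpr (Or.inr rfl), ?_⟩
    rintro ψ (rfl | rfl) hent
    · exact absurd hent (not_entails_bnp_bp i p)
    · exact hent
  -- B_i p belongs to the meet
  have hmemMeet : (Form.box i (Form.atom p) : Form Atom Agt) ∈
      meetKB ({Form.box i (Form.atom p)} : Set (Form Atom Agt))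
        (updateKB {Form.box i (Form.atom p)}
          (negKB {Form.dia i (Form.atom p), Form.dia i (Form.neg (Form.atom p))})) := by
    refine ⟨⟨⟨IsRML.box i (IsRML.pos p), _, Set.mem_singleton _, entails_self _⟩,
      ⟨IsRML.box i (IsRML.pos p), Form.box i (Form.atom p), by rw [hU]; exact hmemU,
        entails_self _⟩⟩, ?_⟩
    rintro ψ ⟨⟨hR, φ, hφ, he⟩, -⟩ hent
    rw [Set.mem_singleton_iff] at hφ; subst hφ
    rcases classify i p hR he with rfl | rfl
    · exact entails_self _
    · exact box_entails_dia i p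
  refine ⟨h1, ?_, ?_⟩
  · intro φ hφ
    rw [Set.mem_singleton_iff] at hφ; subst hφ
    intro M hs w hw
    exact hw _ hmemMeet
  · rintro ⟨hA, -⟩
    have hent := hA _ hmemMeet
    rw [h1] at hent
    have hbad := hent (constM Atom Agt False) (constSerial False) ()
      (by intro ψ hψ; exact absurd hψ (Set.notMem_empty ψ))
    exact hbad () trivial
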